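/- For a metric space X, the following are equivalent: (a) for each r > 0 there is a uniformly bounded cover U of X such that every r-ball intersects only finitely many elements of U; (b) for all r, s > 0 there is a uniformly bounded cover U of X of Lebesgue number at least s such that every r-ball is contained in only finitely many elements of U; (c) for every uniformly bounded cover U of X there exists a uniformly bounded point-finite cover V of which U is a refinement. -/

import Mathlib

/-- A family of subsets covers `X`. -/
def IsCover {X : Type*} (U : Set (Set X)) : Prop := ∀ x : X, ∃ A ∈ U, x ∈ A

/-- A family of subsets of a metric space is uniformly bounded. -/
def UniformlyBounded {X : Type*} [MetricSpace X] (U : Set (Set X)) : Prop :=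
  ∃ M : ℝ, ∀ A ∈ U, ∀ x ∈ A, ∀ y ∈ A, dist x y ≤ M

/-
(a) ⇒ (b): thicken the sets of a cover from (a) by `s`. This gives Lebesgue number `s`, and if an
`r`-ball lies in the thickening of `A`, its centre is within `s` of `A`, so `A` is one of the
finitely many sets meeting the `s`-ball around that centre.
(b) ⇒ (a), (c): shrink each set `A` of a cover from (b) to the points whose `t`-ball lies in `A`.
A Lebesgue number at least `t` keeps this a cover, and at least `t` plus a diameter bound for a
cover `U` puts every member of `U` inside a shrunken set. A point, or a small ball, meeting a
shrunken set brings a whole ball into the original set, and (b) allows only finitely many such.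
(c) ⇒ (b): refine the cover by all `s`-balls.
-/

open Metric hiding IsCover
open Set

theorem Set.Finite.sep_image {α β : Type*} {f : α → β} {s : Set α} {p : β → Prop}
    (h : {a ∈ s | p (f a)}.Finite) : {b ∈ f '' s | p b}.Finite :=
  (h.image f).subset <| by rintro _ ⟨⟨a, ha, rfl⟩, hp⟩; exact ⟨a, ⟨ha, hp⟩, rfl⟩

def ballInterior {X : Type*} [PseudoMetricSpace X] (t : ℝ) (A : Set X) : Set X :=
  {y | ball y t ⊆ A}

section PseudoMetric

variable {X : Type*} [PseudoMetricSpace X] {U : Set (Set X)}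

theorem ballInterior_subset {t : ℝ} (ht : 0 < t) (A : Set X) : ballInterior t A ⊆ A :=
  fun _ hy => hy (mem_ball_self ht)

theorem subset_ballInterior {A B : Set X} {a : X} {M t : ℝ} (hA : ∀ y ∈ A, dist y a ≤ M)
    (hB : ball a (M + t) ⊆ B) : A ⊆ ballInterior t B :=
  fun y hy => (ball_subset_ball' (by linarith [hA y hy])).trans hB

theorem isCover_image_ballInterior {t s : ℝ} (hts : t ≤ s) (hU : ∀ x : X, ∃ A ∈ U, ball x s ⊆ A) :
    IsCover (ballInterior t '' U) := fun x => by
  obtain ⟨A, hA, hxA⟩ := hU x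
  exact ⟨_, mem_image_of_mem _ hA, (ball_subset_ball hts).trans hxA⟩

theorem IsCover.image_thickening (hU : IsCover U) {s : ℝ} (hs : 0 < s) :
    IsCover (thickening s '' U) := fun x => by
  obtain ⟨A, hA, hx⟩ := hU x
  exact ⟨_, mem_image_of_mem _ hA, self_subset_thickening hs A hx⟩

end PseudoMetric

section UniformlyBounded

variable {X : Type*} [MetricSpace X] {U V : Set (Set X)}

theorem UniformlyBounded.of_forall_exists_superset (hU : UniformlyBounded U)
    (hVU : ∀ B ∈ V, ∃ A ∈ U, B ⊆ A) : UniformlyBounded V := by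
  obtain ⟨M, hM⟩ := hU
  refine ⟨M, fun B hB x hx y hy => ?_⟩
  obtain ⟨A, hA, hBA⟩ := hVU B hB
  exact hM A hA x (hBA hx) y (hBA hy)

theorem UniformlyBounded.insert_empty (hU : UniformlyBounded U) :
    UniformlyBounded (insert ∅ U) := by
  obtain ⟨M, hM⟩ := hU
  refine ⟨M, ?_⟩
  rintro B (rfl | hB) x hx y hy
  · exact absurd hx (notMem_empty x)
  · exact hM B hB x hx y hy

theorem uniformlyBounded_range_ball (s : ℝ) :
    UniformlyBounded (range fun x : X => ball x s) := by
  refine ⟨2 * s, ?_⟩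
  rintro _ ⟨x, rfl⟩ y hy z hz
  calc dist y z ≤ dist y x + dist z x := dist_triangle_right y z x
    _ ≤ 2 * s := by rw [mem_ball] at hy hz; linarith

theorem UniformlyBounded.image_thickening (hU : UniformlyBounded U) (s : ℝ) :
    UniformlyBounded (thickening s '' U) := by
  obtain ⟨M, hM⟩ := hU
  refine ⟨M + 2 * s, ?_⟩
  rintro _ ⟨A, hA, rfl⟩ x hx y hy
  obtain ⟨a, ha, hxa⟩ := mem_thickening_iff.mp hx
  obtain ⟨b, hb, hyb⟩ := mem_thickening_iff.mp hy
  calc dist x y ≤ dist x a + dist y b + dist a b := dist_triangle4_right x y a b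
    _ ≤ M + 2 * s := by linarith [hM A hA a ha b hb]

theorem UniformlyBounded.image_ballInterior (hU : UniformlyBounded U) {t : ℝ} (ht : 0 < t) :
    UniformlyBounded (ballInterior t '' U) :=
  hU.of_forall_exists_superset fun _ ⟨A, hA, hB⟩ => ⟨A, hA, hB ▸ ballInterior_subset ht A⟩

end UniformlyBounded

def HasBoundedCoversMeetingBallsFinitely (X : Type*) [MetricSpace X] : Prop :=
  ∀ r : ℝ, 0 < r → ∃ U : Set (Set X), IsCover U ∧ UniformlyBounded U ∧
    ∀ x : X, {A ∈ U | (ball x r ∩ A).Nonempty}.Finite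

def LargeScaleWeaklyParacompact (X : Type*) [MetricSpace X] : Prop :=
  ∀ r s : ℝ, 0 < r → 0 < s → ∃ U : Set (Set X), IsCover U ∧ UniformlyBounded U ∧
    (∀ x : X, ∃ A ∈ U, ball x s ⊆ A) ∧ ∀ x : X, {A ∈ U | ball x r ⊆ A}.Finite

def BoundedCoversRefinePointFinite (X : Type*) [MetricSpace X] : Prop :=
  ∀ U : Set (Set X), IsCover U → UniformlyBounded U →
    ∃ V : Set (Set X), IsCover V ∧ UniformlyBounded V ∧
      (∀ x : X, {A ∈ V | x ∈ A}.Finite) ∧ ∀ A ∈ U, ∃ B ∈ V, A ⊆ B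

section Equivalences

variable {X : Type*} [MetricSpace X]

theorem HasBoundedCoversMeetingBallsFinitely.largeScaleWeaklyParacompact
    (h : HasBoundedCoversMeetingBallsFinitely X) : LargeScaleWeaklyParacompact X := by
  intro r s hr hs
  obtain ⟨U, hcov, hbdd, hfin⟩ := h s hs
  refine ⟨thickening s '' U, hcov.image_thickening hs, hbdd.image_thickening s,
    fun x => ?_, fun x => ((hfin x).subset ?_).sep_image⟩
  · obtain ⟨A, hA, hx⟩ := hcov x
    exact ⟨_, mem_image_of_mem _ hA, ball_subset_thickening hx s⟩
  · rintro A ⟨hA, hball⟩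
    obtain ⟨a, ha, hxa⟩ := mem_thickening_iff.mp (hball (mem_ball_self hr))
    exact ⟨hA, a, mem_ball_comm.mp hxa, ha⟩

theorem LargeScaleWeaklyParacompact.hasBoundedCoversMeetingBallsFinitely
    (h : LargeScaleWeaklyParacompact X) : HasBoundedCoversMeetingBallsFinitely X := by
  intro r hr
  obtain ⟨U, -, hbdd, hleb, hfin⟩ := h r (2 * r) hr (by linarith)
  refine ⟨ballInterior (2 * r) '' U, isCover_image_ballInterior le_rfl hleb,
    hbdd.image_ballInterior (by linarith), fun x => ((hfin x).subset ?_).sep_image⟩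
  rintro A ⟨hA, y, hyx, hy⟩
  refine ⟨hA, (ball_subset_ball' ?_).trans hy⟩
  rw [mem_ball'] at hyx
  linarith

theorem LargeScaleWeaklyParacompact.boundedCoversRefinePointFinite
    (h : LargeScaleWeaklyParacompact X) : BoundedCoversRefinePointFinite X := by
  rintro U - ⟨M, hM⟩
  obtain ⟨W, -, hbdd, hleb, hfin⟩ := h 1 (|M| + 1) one_pos (by positivity)
  -- `∅` is added because an empty member of `U` needs a superset in `V` even when `X` is empty.
  refine ⟨insert ∅ (ballInterior 1 '' W), ?_, (hbdd.image_ballInterior one_pos).insert_empty,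
    fun x => ?_, fun A hA => ?_⟩
  · intro x
    obtain ⟨B, hB, hx⟩ := isCover_image_ballInterior (t := 1) (by linarith [abs_nonneg M]) hleb x
    exact ⟨B, mem_insert_of_mem _ hB, hx⟩
  · refine (Finite.sep_image (f := ballInterior 1) (p := (x ∈ ·)) (hfin x)).subset ?_
    rintro B ⟨rfl | hB, hx⟩
    · exact absurd hx (notMem_empty x)
    · exact ⟨hB, hx⟩
  · rcases A.eq_empty_or_nonempty with rfl | ⟨a, ha⟩
    · exact ⟨∅, mem_insert _ _, subset_rfl⟩
    obtain ⟨B, hB, hball⟩ := hleb a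
    exact ⟨_, mem_insert_of_mem _ (mem_image_of_mem _ hB),
      subset_ballInterior (fun y hy => (hM A hA y hy a ha).trans (le_abs_self M)) hball⟩

theorem BoundedCoversRefinePointFinite.largeScaleWeaklyParacompact
    (h : BoundedCoversRefinePointFinite X) : LargeScaleWeaklyParacompact X := by
  intro r s hr hs
  obtain ⟨V, hcov, hbdd, hpf, hrefine⟩ := h (range fun x => ball x s)
    (fun x => ⟨_, mem_range_self x, mem_ball_self hs⟩) (uniformlyBounded_range_ball s)
  refine ⟨V, hcov, hbdd, fun x => hrefine _ (mem_range_self x), fun x => (hpf x).subset ?_⟩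
  exact fun B ⟨hB, hball⟩ => ⟨hB, hball (mem_ball_self hr)⟩

end Equivalences

theorem stmt_8 {X : Type*} [MetricSpace X] :
    ((∀ r : ℝ, 0 < r → ∃ U : Set (Set X), IsCover U ∧ UniformlyBounded U ∧
        ∀ x : X, {A ∈ U | (Metric.ball x r ∩ A).Nonempty}.Finite) ↔
      (∀ r s : ℝ, 0 < r → 0 < s → ∃ U : Set (Set X), IsCover U ∧ UniformlyBounded U ∧
        (∀ x : X, ∃ A ∈ U, Metric.ball x s ⊆ A) ∧
        ∀ x : X, {A ∈ U | Metric.ball x r ⊆ A}.Finite)) ∧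
    ((∀ r s : ℝ, 0 < r → 0 < s → ∃ U : Set (Set X), IsCover U ∧ UniformlyBounded U ∧
        (∀ x : X, ∃ A ∈ U, Metric.ball x s ⊆ A) ∧
        ∀ x : X, {A ∈ U | Metric.ball x r ⊆ A}.Finite) ↔
      (∀ U : Set (Set X), IsCover U → UniformlyBounded U →
        ∃ V : Set (Set X), IsCover V ∧ UniformlyBounded V ∧
          (∀ x : X, {A ∈ V | x ∈ A}.Finite) ∧
          ∀ A ∈ U, ∃ B ∈ V, A ⊆ B)) :=
  ⟨⟨HasBoundedCoversMeetingBallsFinitely.largeScaleWeaklyParacompact,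
      LargeScaleWeaklyParacompact.hasBoundedCoversMeetingBallsFinitely⟩,
    ⟨LargeScaleWeaklyParacompact.boundedCoversRefinePointFinite,
      BoundedCoversRefinePointFinite.largeScaleWeaklyParacompact⟩⟩
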